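/- arXiv:math/0203275 — 6 statements merged into one kernel-verified Lean document; each statement's English description precedes it below -/
import Mathlib

section
/- Let X be a random variable with median 0, and suppose 1/3 < c < 1/√8. Define β_0 = P{X > 0} and β_k - β_{k+1} = P{X ∈ (cσ(X)k, cσ(X)(k+1)]} for k ≥ 0, where σ(X) > 0 is the standard deviation. If β_{k+1} ≤ β_k/2 for all k ≥ 0, then ∫_0^∞ P{X > λ} · 2λ dλ < σ(X)^2 / 2. -/
open MeasureTheory ProbabilityTheory Set

/-!
By telescoping, `β k` is the tail `P{X > k c σ}`; the median bounds `β 0` by `1/2`, so the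
halving condition gives `β k ≤ 2^{-(k+1)}`. Bounding the tail on `[k c σ, (k+1) c σ)` by its value
at the left end point gives `∫ ≤ ∑ 2 (k+1) (c σ)² 2^{-(k+1)} = 4 c² σ²`, and `4 c² < 1/2`
because `c < 1/√8`.
-/

section Tails

variable {Ω : Type*} [MeasurableSpace Ω] {μ : Measure Ω} {X : Ω → ℝ}

theorem measureReal_preimage_Ioi_eq_add [IsFiniteMeasure μ] (hX : AEMeasurable X μ) {s t : ℝ}
    (hst : s ≤ t) :
    μ.real (X ⁻¹' Ioi s) = μ.real (X ⁻¹' Ioc s t) + μ.real (X ⁻¹' Ioi t) := by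
  rw [← Ioc_union_Ioi_eq_Ioi hst, preimage_union]
  exact measureReal_union₀ (hX.nullMeasurable measurableSet_Ioi)
    ((Ioc_disjoint_Ioi_same.preimage X).aedisjoint)

theorem measureReal_preimage_Ioi_le_half [IsProbabilityMeasure μ] (hX : AEMeasurable X μ)
    {m : ℝ} (hm : 1 / 2 ≤ μ.real (X ⁻¹' Iic m)) : μ.real (X ⁻¹' Ioi m) ≤ 1 / 2 := by
  rw [← compl_Iic, preimage_compl,
    probReal_compl_eq_one_sub₀ (hX.nullMeasurable measurableSet_Iic)]
  linarith

theorem antitone_measureReal_preimage_Ioi [IsFiniteMeasure μ] :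
    Antitone fun l ↦ μ.real (X ⁻¹' Ioi l) :=
  fun _ _ h ↦ measureReal_mono (preimage_mono (Ioi_subset_Ioi h))

theorem eq_measureReal_preimage_Ioi_of_sub_eq [IsFiniteMeasure μ] (hX : AEMeasurable X μ)
    {a : ℝ} (ha : 0 ≤ a) {β : ℕ → ℝ} (h0 : β 0 = μ.real (X ⁻¹' Ioi 0))
    (hβ : ∀ k : ℕ, β k - β (k + 1) = μ.real (X ⁻¹' Ioc (a * k) (a * (k + 1))))
    (k : ℕ) : β k = μ.real (X ⁻¹' Ioi (a * k)) := by
  induction k with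
  | zero => simpa using h0
  | succ k ih =>
    have := measureReal_preimage_Ioi_eq_add hX (s := a * k) (t := a * (k + 1)) (by nlinarith)
    push_cast
    linarith [hβ k]

end Tails

theorem le_div_two_pow_of_le_div_two {β : ℕ → ℝ} (h : ∀ k, β (k + 1) ≤ β k / 2)
    (k : ℕ) : β k ≤ β 0 / 2 ^ k := by
  induction k with
  | zero => simp
  | succ k ih =>
    calc β (k + 1) ≤ β k / 2 := h k
      _ ≤ β 0 / 2 ^ k / 2 := by linarith
      _ = β 0 / 2 ^ (k + 1) := by ring

theorem Ioi_zero_subset_iUnion_Ico {a : ℝ} (ha : 0 < a) :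
    Ioi (0 : ℝ) ⊆ ⋃ k : ℕ, Ico (a * k) (a * (k + 1)) := by
  intro l hl
  refine mem_iUnion.mpr ⟨⌊l / a⌋₊, ?_, ?_⟩
  · rw [← le_div_iff₀' ha]; exact Nat.floor_le (div_nonneg hl.le ha.le)
  · rw [← div_lt_iff₀' ha]; exact Nat.lt_floor_add_one _

section StepBound

variable {f : ℝ → ℝ} {a : ℝ}

theorem lintegral_Ioi_mul_two_le_tsum (hf : Antitone f) (hf0 : 0 ≤ f) (ha : 0 < a) :
    ∫⁻ l in Ioi 0, ENNReal.ofReal (f l * (2 * l))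
      ≤ ∑' k : ℕ, ENNReal.ofReal (2 * a ^ 2 * (k + 1) * f (a * k)) := by
  have hpiece (k : ℕ) : ∫⁻ l in Ico (a * k) (a * (k + 1)), ENNReal.ofReal (f l * (2 * l))
      ≤ ENNReal.ofReal (2 * a ^ 2 * (k + 1) * f (a * k)) := by
    calc ∫⁻ l in Ico (a * k) (a * (k + 1)), ENNReal.ofReal (f l * (2 * l))
        ≤ ∫⁻ _ in Ico (a * k) (a * (k + 1)),
            ENNReal.ofReal (f (a * k) * (2 * (a * (k + 1)))) := by
          refine setLIntegral_mono measurable_const fun l hl ↦ ENNReal.ofReal_le_ofReal ?_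
          have : 0 ≤ a * k := by positivity
          exact mul_le_mul (hf hl.1) (by linarith [hl.2]) (by linarith [hl.1]) (hf0 _)
      _ = ENNReal.ofReal (2 * a ^ 2 * (k + 1) * f (a * k)) := by
          rw [setLIntegral_const, Real.volume_Ico,
            ← ENNReal.ofReal_mul (mul_nonneg (hf0 _) (by positivity))]
          congr 1; ring
  calc ∫⁻ l in Ioi 0, ENNReal.ofReal (f l * (2 * l))
      ≤ ∫⁻ l in ⋃ k : ℕ, Ico (a * k) (a * (k + 1)), ENNReal.ofReal (f l * (2 * l)) :=
        lintegral_mono_set (Ioi_zero_subset_iUnion_Ico ha)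
    _ ≤ _ := (lintegral_iUnion_le _ _).trans (ENNReal.tsum_le_tsum hpiece)

theorem setIntegral_Ioi_mul_two_le_of_hasSum (hf : Antitone f) (hf0 : 0 ≤ f) (ha : 0 < a)
    {b : ℕ → ℝ} (hb : ∀ k : ℕ, f (a * k) ≤ b k) {S : ℝ}
    (hS : HasSum (fun k : ℕ ↦ 2 * a ^ 2 * (k + 1) * b k) S) :
    ∫ l in Ioi 0, f l * (2 * l) ≤ S := by
  have hterm (k : ℕ) : 0 ≤ 2 * a ^ 2 * (k + 1) * b k :=
    mul_nonneg (by positivity) ((hf0 (a * k)).trans (hb k))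
  have hS0 : 0 ≤ S := hS.nonneg hterm
  rw [integral_eq_lintegral_of_nonneg_ae]
  · refine ENNReal.toReal_le_of_le_ofReal hS0 ((lintegral_Ioi_mul_two_le_tsum hf hf0 ha).trans ?_)
    rw [← hS.tsum_eq, ENNReal.ofReal_tsum_of_nonneg hterm hS.summable]
    exact ENNReal.tsum_le_tsum fun k ↦ ENNReal.ofReal_le_ofReal (by gcongr; exact hb k)
  · filter_upwards [ae_restrict_mem measurableSet_Ioi] with l hl
    exact mul_nonneg (hf0 l) (by linarith [mem_Ioi.mp hl])
  · exact (hf.measurable.mul (measurable_const.mul measurable_id)).aestronglyMeasurable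

end StepBound

theorem hasSum_mul_succ_mul_half_pow (a : ℝ) :
    HasSum (fun k : ℕ ↦ 2 * a ^ 2 * (k + 1) * (1 / 2 : ℝ) ^ (k + 1)) (4 * a ^ 2) := by
  have h := (hasSum_choose_mul_geometric_of_norm_lt_one (𝕜 := ℝ) 1 (r := 1 / 2)
    (by norm_num)).mul_left (a ^ 2)
  rw [show (4 * a ^ 2 : ℝ) = a ^ 2 * (1 / (1 - 1 / 2) ^ (1 + 1)) by ring]
  refine h.congr_fun fun k ↦ ?_
  rw [Nat.choose_one_right]
  push_cast
  ring

theorem stmt_2_general {Ω : Type*} [MeasureSpace Ω] [IsProbabilityMeasure (ℙ : Measure Ω)]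
    (X : Ω → ℝ) (hX : MemLp X 2)
    (σX : ℝ) (hσpos : 0 < σX)
    (hmed2 : (ℙ {ω | X ω ≤ 0}).toReal ≥ 1 / 2)
    (c : ℝ) (hc1 : 1 / 3 < c) (hc2 : c < 1 / Real.sqrt 8)
    (β : ℕ → ℝ) (hβ0 : β 0 = (ℙ {ω | X ω > 0}).toReal)
    (hβ : ∀ k : ℕ, β k - β (k + 1) =
      (ℙ {ω | X ω ∈ Set.Ioc (c * σX * k) (c * σX * (k + 1))}).toReal)
    (hhalf : ∀ k : ℕ, β (k + 1) ≤ β k / 2) :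
    ∫ l in Set.Ioi (0 : ℝ), (ℙ {ω | X ω > l}).toReal * (2 * l) < σX ^ 2 / 2 := by
  have hXm : AEMeasurable X ℙ := hX.aestronglyMeasurable.aemeasurable
  have ha : 0 < c * σX := mul_pos (by linarith) hσpos
  have htail (k : ℕ) : (ℙ {ω | X ω > c * σX * k}).toReal ≤ (1 / 2) ^ (k + 1) := by
    calc (ℙ {ω | X ω > c * σX * k}).toReal
        = β k := (eq_measureReal_preimage_Ioi_of_sub_eq hXm ha.le hβ0 hβ k).symm
      _ ≤ β 0 / 2 ^ k := le_div_two_pow_of_le_div_two hhalf k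
      _ ≤ 1 / 2 / 2 ^ k := by
        gcongr
        exact hβ0 ▸ measureReal_preimage_Ioi_le_half hXm hmed2
      _ = (1 / 2) ^ (k + 1) := by rw [pow_succ, one_div_pow]; ring
  have hc : c ^ 2 < 1 / 8 := by
    rwa [one_div, ← Real.sqrt_inv, Real.lt_sqrt (by linarith), ← one_div] at hc2
  calc ∫ l in Ioi 0, (ℙ {ω | X ω > l}).toReal * (2 * l)
      ≤ 4 * (c * σX) ^ 2 :=
        setIntegral_Ioi_mul_two_le_of_hasSum antitone_measureReal_preimage_Ioi
          (fun _ ↦ measureReal_nonneg) ha htail (hasSum_mul_succ_mul_half_pow _)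
    _ < σX ^ 2 / 2 := by linarith [mul_lt_mul_of_pos_right hc (pow_pos hσpos 2)]

theorem stmt_2 {Ω : Type*} [MeasureSpace Ω] [IsProbabilityMeasure (ℙ : Measure Ω)]
    (X : Ω → ℝ) (hX : MemLp X 2)
    (σX : ℝ) (hσX : σX = Real.sqrt (variance X ℙ)) (hσpos : 0 < σX)
    (hmed1 : (ℙ {ω | X ω ≥ 0}).toReal ≥ 1 / 2)
    (hmed2 : (ℙ {ω | X ω ≤ 0}).toReal ≥ 1 / 2)
    (c : ℝ) (hc1 : 1 / 3 < c) (hc2 : c < 1 / Real.sqrt 8)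
    (β : ℕ → ℝ) (hβ0 : β 0 = (ℙ {ω | X ω > 0}).toReal)
    (hβ : ∀ k : ℕ, β k - β (k + 1) =
      (ℙ {ω | X ω ∈ Set.Ioc (c * σX * k) (c * σX * (k + 1))}).toReal)
    (hhalf : ∀ k : ℕ, β (k + 1) ≤ β k / 2) :
    ∫ l in Set.Ioi (0 : ℝ), (ℙ {ω | X ω > l}).toReal * (2 * l) < σX ^ 2 / 2 :=
  stmt_2_general X hX σX hσpos hmed2 c hc1 hc2 β hβ0 hβ hhalf
end

section
/- Let (Ω, μ) be a probability space and A a finite set of functions, |A| > 1, which is t-separated in L_2(μ) (distinct elements are at L_2-distance at least t). Then there exists a point i ∈ Ω such that the variance of the random variable f ↦ f(i), where f is uniform on A, is at least t^2/4. -/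
/-!
The variance of `f ↦ f i` under the uniform law on `A` is half the mean squared distance
`(2 |A|²)⁻¹ ∑_{f,g ∈ A} (f i - g i)²` between two independent draws. Averaging over `i ∼ μ` turns
each `(f i - g i)²` into `‖f - g‖²_{L²(μ)} ≥ t²` for `f ≠ g`, so the mean variance is at least
`(|A| - 1) / (2 |A|) · t² ≥ t² / 4` when `|A| ≥ 2`; some point does at least as well as the mean.
-/

open MeasureTheory Finset

namespace Finset

variable {ι : Type*}

theorem inv_card_mul_sum_sq_sub_mean (s : Finset ι) (a : ι → ℝ) :
    (#s : ℝ)⁻¹ * ∑ i ∈ s, (a i - (#s : ℝ)⁻¹ * ∑ j ∈ s, a j) ^ 2 =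
      (2 * (#s : ℝ) ^ 2)⁻¹ * ∑ i ∈ s, ∑ j ∈ s, (a i - a j) ^ 2 := by
  rcases s.eq_empty_or_nonempty with rfl | hs
  · simp
  have hn : (#s : ℝ) ≠ 0 := by positivity
  have hpair : ∑ i ∈ s, ∑ j ∈ s, (a i - a j) ^ 2 =
      2 * #s * ∑ i ∈ s, a i ^ 2 - 2 * (∑ i ∈ s, a i) ^ 2 := by
    simp only [sub_sq, sum_add_distrib, sum_sub_distrib, sum_const, nsmul_eq_mul, ← mul_sum,
      ← sum_mul]
    ring
  have hdev : ∑ i ∈ s, (a i - (#s : ℝ)⁻¹ * ∑ j ∈ s, a j) ^ 2 =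
      ∑ i ∈ s, a i ^ 2 - (#s : ℝ)⁻¹ * (∑ i ∈ s, a i) ^ 2 := by
    simp only [sub_sq, sum_add_distrib, sum_sub_distrib, sum_const, nsmul_eq_mul, ← mul_sum,
      ← sum_mul]
    field_simp
    ring
  rw [hpair, hdev]
  field_simp

theorem card_mul_card_sub_one_mul_le_sum_sum (s : Finset ι) {d : ι → ι → ℝ} {c : ℝ}
    (hd : ∀ i ∈ s, ∀ j ∈ s, 0 ≤ d i j) (hc : ∀ i ∈ s, ∀ j ∈ s, i ≠ j → c ≤ d i j) :
    #s * (#s - 1 : ℝ) * c ≤ ∑ i ∈ s, ∑ j ∈ s, d i j := by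
  classical
  have hrow : ∀ i ∈ s, (#s - 1 : ℝ) * c ≤ ∑ j ∈ s, d i j := fun i hi =>
    calc (#s - 1 : ℝ) * c = #(s.erase i) • c := by
          rw [card_erase_of_mem hi, nsmul_eq_mul, Nat.cast_pred (card_pos.2 ⟨i, hi⟩)]
      _ ≤ ∑ j ∈ s.erase i, d i j :=
          card_nsmul_le_sum _ _ _ fun j hj =>
            hc i hi j (mem_of_mem_erase hj) (ne_of_mem_erase hj).symm
      _ ≤ ∑ j ∈ s, d i j :=
          sum_le_sum_of_subset_of_nonneg (erase_subset i s) fun j hj _ => hd i hi j hj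
  calc #s * (#s - 1 : ℝ) * c = ∑ _i ∈ s, (#s - 1 : ℝ) * c := by
        rw [sum_const, nsmul_eq_mul, mul_assoc]
    _ ≤ _ := sum_le_sum hrow

end Finset

theorem stmt_4_general {Ω : Type*} [MeasurableSpace Ω] (μ : Measure Ω) [IsProbabilityMeasure μ]
    (A : Finset (Ω → ℝ)) (hA : 1 < A.card)
    (hmem : ∀ f ∈ A, MemLp f 2 μ)
    (t : ℝ)
    (hsep : ∀ f ∈ A, ∀ g ∈ A, f ≠ g → ∫ ω, (f ω - g ω) ^ 2 ∂μ ≥ t ^ 2) :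
    ∃ i : Ω, ((A.card : ℝ))⁻¹ *
        ∑ f ∈ A, (f i - (A.card : ℝ)⁻¹ * ∑ g ∈ A, g i) ^ 2 ≥ t ^ 2 / 4 := by
  have hint : ∀ f ∈ A, ∀ g ∈ A, Integrable (fun ω => (f ω - g ω) ^ 2) μ :=
    fun f hf g hg => ((hmem f hf).sub (hmem g hg)).integrable_sq
  obtain ⟨i, hi⟩ := exists_integral_le (μ := μ)
    (f := fun ω => (2 * (#A : ℝ) ^ 2)⁻¹ * ∑ f ∈ A, ∑ g ∈ A, (f ω - g ω) ^ 2)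
    ((integrable_finsetSum A fun f hf => integrable_finsetSum A (hint f hf)).const_mul _)
  refine ⟨i, ?_⟩
  rw [ge_iff_le, inv_card_mul_sum_sq_sub_mean]
  refine le_trans ?_ hi
  rw [integral_const_mul, integral_finsetSum A fun f hf => integrable_finsetSum A (hint f hf),
    sum_congr rfl fun f hf => integral_finsetSum A (hint f hf)]
  have hsum := card_mul_card_sub_one_mul_le_sum_sum A
    (fun f _ g _ => integral_nonneg fun ω => sq_nonneg (f ω - g ω)) hsep
  have hn : (2 : ℝ) ≤ #A := by exact_mod_cast hA
  calc t ^ 2 / 4 ≤ (2 * (#A : ℝ) ^ 2)⁻¹ * (#A * (#A - 1 : ℝ) * t ^ 2) := by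
        rw [← div_eq_inv_mul, le_div_iff₀ (by positivity)]
        have hA0 : (0 : ℝ) ≤ #A := by positivity
        nlinarith [mul_nonneg (mul_nonneg hA0 (sub_nonneg.2 hn)) (sq_nonneg t)]
    _ ≤ _ := by gcongr

theorem stmt_4 {Ω : Type*} [MeasurableSpace Ω] (μ : Measure Ω) [IsProbabilityMeasure μ]
    (A : Finset (Ω → ℝ)) (hA : 1 < A.card)
    (hmem : ∀ f ∈ A, MemLp f 2 μ)
    (t : ℝ) (ht : 0 < t)
    (hsep : ∀ f ∈ A, ∀ g ∈ A, f ≠ g → ∫ ω, (f ω - g ω) ^ 2 ∂μ ≥ t ^ 2) :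
    ∃ i : Ω, ((A.card : ℝ))⁻¹ *
        ∑ f ∈ A, (f i - (A.card : ℝ)⁻¹ * ∑ g ∈ A, g i) ^ 2 ≥ t ^ 2 / 4 :=
  stmt_4_general μ A hA hmem t hsep
end

section
/- Let A be a finite class of functions on a probability space (Ω, μ) with |A| > 1 which is t-separated in L_2(μ). Then there exist a point i ∈ Ω, a real number a, and 0 < β ≤ 1/2 such that, setting N1 = |{f ∈ A : f(i) > a + t/12}| and N2 = |{f ∈ A : f(i) < a - t/12}|, either (N1 ≥ (1-β)|A| and N2 ≥ (β/2)|A|) or (N2 ≥ (1-β)|A| and N1 ≥ (β/2)|A|). -/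
/-!
Averaging over `μ` gives a point `ω` where the values `x_f = f ω` satisfy
`∑_{f,g} (x_f - x_g)² ≥ n(n-1)t²`, hence `∑_f (x_f - m)² ≥ 36c²n` around a median `m`,
where `c = t/12`. One side of the median, say the upper one, carries `18c²n ≥ 36c²·#{x > m}`.
It then suffices to find a window `[a - c, a + c]` with `a > m + c` that holds no more values
than lie above it, while some value does: everything at or below the median lies below the
window, and `β = #{x ≥ a - c}/n`. If there were no such window, the number of values above
`u + 2c` would be less than half the number above `u`, and an induction on that number keeps the
tail sums `∑_{x > u} (x - u)²` below `36c²·#{x > u}`.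
-/

open MeasureTheory Finset

theorem exists_beta_of_counts {n L M H : ℕ} (hL : n ≤ 2 * L) (hH : 1 ≤ H) (hMH : M ≤ H)
    (hn : L + M + H = n) :
    ∃ β : ℝ, 0 < β ∧ β ≤ 1 / 2 ∧ (L : ℝ) ≥ (1 - β) * n ∧ (H : ℝ) ≥ β / 2 * n := by
  have hL' : (n : ℝ) ≤ 2 * L := by exact_mod_cast hL
  have hH' : (1 : ℝ) ≤ H := by exact_mod_cast hH
  have hMH' : (M : ℝ) ≤ H := by exact_mod_cast hMH
  have hn' : (L + M + H : ℝ) = n := by exact_mod_cast hn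
  have hpos : (0 : ℝ) < n := by linarith [(M.cast_nonneg : (0 : ℝ) ≤ M)]
  have hβn : (M + H : ℝ) / n * n = M + H := div_mul_cancel₀ _ hpos.ne'
  refine ⟨(M + H) / n, by positivity, ?_, ?_, ?_⟩
  · rw [div_le_iff₀ hpos]; linarith
  · linarith
  · linarith

section Values

variable {α : Type*} (A : Finset α) (x : α → ℝ)

theorem sum_sum_sub_sq_le :
    ∑ f ∈ A, ∑ g ∈ A, (x f - x g) ^ 2 ≤ 2 * #A * ∑ f ∈ A, x f ^ 2 := by
  have h : ∑ f ∈ A, ∑ g ∈ A, (x f - x g) ^ 2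
      = 2 * #A * ∑ f ∈ A, x f ^ 2 - 2 * (∑ f ∈ A, x f) ^ 2 := by
    simp only [sub_sq, sum_add_distrib, sum_sub_distrib, sum_const, nsmul_eq_mul, ← mul_sum,
      ← sum_mul]
    ring
  nlinarith [sq_nonneg (∑ f ∈ A, x f)]

theorem sum_sq_sub_le_sum_filter_add_sum_filter (m : ℝ) :
    ∑ f ∈ A, (x f - m) ^ 2
      ≤ ∑ f ∈ A with m < x f, (x f - m) ^ 2 + ∑ f ∈ A with x f < m, (m - x f) ^ 2 := by
  simp only [sum_filter, ← sum_add_distrib]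
  refine sum_le_sum fun f _ => ?_
  split_ifs <;> nlinarith

theorem exists_median (hA : A.Nonempty) :
    ∃ m, #A ≤ 2 * #{f ∈ A | x f ≤ m} ∧ #A ≤ 2 * #{f ∈ A | m ≤ x f} := by
  obtain ⟨fmax, hfmax, hmax⟩ := exists_max_image A x hA
  have hT : {f ∈ A | #A ≤ 2 * #{g ∈ A | x g ≤ x f}}.Nonempty :=
    ⟨fmax, mem_filter.2 ⟨hfmax, by rw [filter_true_of_mem hmax]; omega⟩⟩
  obtain ⟨f₀, hf₀, hmin⟩ := exists_min_image _ x hT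
  refine ⟨x f₀, (mem_filter.1 hf₀).2, ?_⟩
  by_contra! hlt
  have hcompl := card_filter_add_card_filter_not (s := A) (fun g => x f₀ ≤ x g)
  simp only [not_le] at hcompl
  have hbelow : {g ∈ A | x g < x f₀}.Nonempty := card_pos.1 (by omega)
  obtain ⟨g₁, hg₁, hg₁max⟩ := exists_max_image _ x hbelow
  have hsub : {g ∈ A | x g < x f₀} ⊆ {g ∈ A | x g ≤ x g₁} := fun g hg =>
    mem_filter.2 ⟨(mem_filter.1 hg).1, hg₁max g hg⟩
  have hg₁T := hmin g₁ (mem_filter.2 ⟨(mem_filter.1 hg₁).1, by linarith [card_le_card hsub]⟩)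
  linarith [(mem_filter.1 hg₁).2]

theorem card_filter_lt_add_card_filter_Icc_add_card_filter_gt {l r : ℝ} (hlr : l ≤ r) :
    #{f ∈ A | x f < l} + #{f ∈ A | l ≤ x f ∧ x f ≤ r} + #{f ∈ A | r < x f} = #A := by
  have h₁ := card_filter_add_card_filter_not (s := A) (fun f => x f < l)
  have h₂ := card_filter_add_card_filter_not (s := {f ∈ A | ¬ x f < l}) (fun f => x f ≤ r)
  rw [filter_filter, filter_filter] at h₂
  have e₁ : {f ∈ A | ¬ x f < l ∧ x f ≤ r} = {f ∈ A | l ≤ x f ∧ x f ≤ r} :=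
    filter_congr fun f _ => by rw [not_lt]
  have e₂ : {f ∈ A | ¬ x f < l ∧ ¬ x f ≤ r} = {f ∈ A | r < x f} :=
    filter_congr fun f _ => by rw [not_lt, not_le]; exact ⟨And.right, fun h => ⟨hlr.trans h.le, h⟩⟩
  rw [e₁, e₂] at h₂
  omega

theorem sum_tail_sq_le (u c : ℝ) :
    ∑ f ∈ A with u < x f, (x f - u) ^ 2 ≤ 4 * c ^ 2 * #{f ∈ A | u < x f}
      + 4 / 3 * ∑ f ∈ A with u + 2 * c < x f, (x f - (u + 2 * c)) ^ 2
      + 12 * c ^ 2 * #{f ∈ A | u + 2 * c < x f} := by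
  simp only [sum_filter, natCast_card_filter, mul_sum, ← sum_add_distrib]
  refine sum_le_sum fun f _ => ?_
  split_ifs <;> nlinarith [sq_nonneg (x f - u - 8 * c)]

theorem two_mul_card_tail_add_one_le {m c u : ℝ} (hc : 0 ≤ c) (hu : m ≤ u)
    (hwin : ∀ a, m + c < a → {f ∈ A | a + c < x f}.Nonempty →
      #{f ∈ A | a + c < x f} < #{f ∈ A | a - c ≤ x f ∧ x f ≤ a + c})
    (hne : {f ∈ A | u + 2 * c < x f}.Nonempty) :
    2 * #{f ∈ A | u + 2 * c < x f} + 1 ≤ #{f ∈ A | u < x f} := by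
  classical
  obtain ⟨f₀, hf₀, hmin⟩ := exists_min_image _ x hne
  have hv := (mem_filter.1 hf₀).2
  -- no value lies strictly between `u + 2c` and `x f₀`, so their midpoint can serve as `a + c`
  set a := (u + x f₀) / 2 with ha
  have hH : {f ∈ A | a + c < x f} = {f ∈ A | u + 2 * c < x f} := filter_congr fun f hf =>
    ⟨fun h => by linarith, fun h => by linarith [hmin f (mem_filter.2 ⟨hf, h⟩)]⟩
  have hsub : {f ∈ A | u + 2 * c < x f} ⊆ {f ∈ A | u < x f} := fun f hf => by
    rw [mem_filter] at hf ⊢; exact ⟨hf.1, by linarith⟩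
  have hM : {f ∈ A | a - c ≤ x f ∧ x f ≤ a + c}
      ⊆ {f ∈ A | u < x f} \ {f ∈ A | u + 2 * c < x f} := fun f hf => by
    obtain ⟨hfA, hlo, hhi⟩ := mem_filter.1 hf
    exact mem_sdiff.2 ⟨mem_filter.2 ⟨hfA, by linarith⟩, fun h => by linarith [hmin f h]⟩
  have hlt := hwin a (by linarith) (hH ▸ hne)
  rw [hH] at hlt
  have := card_le_card hM
  rw [card_sdiff_of_subset hsub] at this
  omega

theorem sum_tail_sq_lt {m c : ℝ} (hc : 0 < c)
    (hwin : ∀ a, m + c < a → {f ∈ A | a + c < x f}.Nonempty →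
      #{f ∈ A | a + c < x f} < #{f ∈ A | a - c ≤ x f ∧ x f ≤ a + c})
    (u : ℝ) (hu : m ≤ u) (hne : {f ∈ A | u < x f}.Nonempty) :
    ∑ f ∈ A with u < x f, (x f - u) ^ 2 < 36 * c ^ 2 * #{f ∈ A | u < x f} := by
  induction hn : #{f ∈ A | u < x f} using Nat.strong_induction_on generalizing u with
  | _ n ih =>
  have hband := sum_tail_sq_le A x u c
  rw [hn] at hband
  have hpos : (0 : ℝ) < n := by rw [← hn]; exact_mod_cast hne.card_pos
  have hc2 : 0 < c ^ 2 := by positivity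
  rcases {f ∈ A | u + 2 * c < x f}.eq_empty_or_nonempty with hemp | hne'
  · rw [hemp, sum_empty, card_empty, Nat.cast_zero] at hband
    nlinarith
  · have hdbl := two_mul_card_tail_add_one_le A x hc.le hu hwin hne'
    rw [hn] at hdbl
    have hIH := ih _ (by omega) (u + 2 * c) (by linarith) hne' rfl
    have hdbl' : (2 * #{f ∈ A | u + 2 * c < x f} + 1 : ℝ) ≤ n := by exact_mod_cast hdbl
    nlinarith [mul_le_mul_of_nonneg_left hdbl' hc2.le]

theorem exists_window {m c : ℝ} (hc : 0 < c) (hne : {f ∈ A | m < x f}.Nonempty)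
    (hsum : 36 * c ^ 2 * #{f ∈ A | m < x f} ≤ ∑ f ∈ A with m < x f, (x f - m) ^ 2) :
    ∃ a, m + c < a ∧ {f ∈ A | a + c < x f}.Nonempty ∧
      #{f ∈ A | a - c ≤ x f ∧ x f ≤ a + c} ≤ #{f ∈ A | a + c < x f} := by
  by_contra! hwin
  exact (sum_tail_sq_lt A x hc hwin m le_rfl hne).not_ge hsum

theorem exists_upper_split {m c : ℝ} (hc : 0 < c) (hA : A.Nonempty)
    (hmed : #A ≤ 2 * #{f ∈ A | x f ≤ m})
    (hsum : 18 * c ^ 2 * #A ≤ ∑ f ∈ A with m < x f, (x f - m) ^ 2) :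
    ∃ a β : ℝ, 0 < β ∧ β ≤ 1 / 2 ∧ (#{f ∈ A | x f < a - c} : ℝ) ≥ (1 - β) * #A ∧
      (#{f ∈ A | a + c < x f} : ℝ) ≥ β / 2 * #A := by
  have hcompl := card_filter_add_card_filter_not (s := A) (fun f => x f ≤ m)
  simp only [not_le] at hcompl
  have hP : (2 * #{f ∈ A | m < x f} : ℝ) ≤ #A := by exact_mod_cast (by omega)
  have hne : {f ∈ A | m < x f}.Nonempty := by
    rw [nonempty_iff_ne_empty]
    intro hemp
    rw [hemp, sum_empty] at hsum
    have : (0 : ℝ) < #A := by exact_mod_cast hA.card_pos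
    nlinarith [sq_pos_of_pos hc]
  obtain ⟨a, hma, hH, hMH⟩ :=
    exists_window A x hc hne (by nlinarith [mul_le_mul_of_nonneg_left hP (sq_nonneg c)])
  have hL : #{f ∈ A | x f ≤ m} ≤ #{f ∈ A | x f < a - c} :=
    card_le_card fun f hf => by
      rw [mem_filter] at hf ⊢; exact ⟨hf.1, by linarith⟩
  obtain ⟨β, hβ⟩ := exists_beta_of_counts (by omega) hH.card_pos hMH
    (card_filter_lt_add_card_filter_Icc_add_card_filter_gt A x (by linarith : a - c ≤ a + c))
  exact ⟨a, β, hβ⟩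

theorem exists_split {c : ℝ} (hc : 0 < c) (hA : 1 < #A)
    (hpair : #A * (#A - 1) * (12 * c) ^ 2 ≤ ∑ f ∈ A, ∑ g ∈ A, (x f - x g) ^ 2) :
    ∃ a β : ℝ, 0 < β ∧ β ≤ 1 / 2 ∧
      (((#{f ∈ A | x f > a + c} : ℝ) ≥ (1 - β) * #A ∧
        (#{f ∈ A | x f < a - c} : ℝ) ≥ (β / 2) * #A) ∨
       ((#{f ∈ A | x f < a - c} : ℝ) ≥ (1 - β) * #A ∧
        (#{f ∈ A | x f > a + c} : ℝ) ≥ (β / 2) * #A)) := by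
  have hAne : A.Nonempty := card_pos.1 (by omega)
  obtain ⟨m, hbelow, habove⟩ := exists_median A x hAne
  have hn : (2 : ℝ) ≤ #A := by exact_mod_cast hA
  have hspread : 36 * c ^ 2 * #A ≤ ∑ f ∈ A, (x f - m) ^ 2 := by
    have h := sum_sum_sub_sq_le A (fun f => x f - m)
    simp only [sub_sub_sub_cancel_right] at h
    nlinarith [mul_nonneg (sq_nonneg c) (sub_nonneg.2 hn)]
  have hsides := sum_sq_sub_le_sum_filter_add_sum_filter A x m
  rcases le_total (18 * c ^ 2 * #A) (∑ f ∈ A with m < x f, (x f - m) ^ 2) with hup | hdown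
  · obtain ⟨a, β, hβ, hβ', hlow, hhigh⟩ := exists_upper_split A x hc hAne hbelow hup
    exact ⟨a, β, hβ, hβ', Or.inr ⟨hlow, hhigh⟩⟩
  · obtain ⟨a, β, hβ, hβ', hlow, hhigh⟩ := exists_upper_split A (fun f => -x f) (m := -m) hc hAne
      (by simpa only [neg_le_neg_iff] using habove)
      (by simp only [neg_lt_neg_iff, neg_sub_neg]; linarith)
    refine ⟨-a, β, hβ, hβ', Or.inl ⟨?_, ?_⟩⟩
    · convert hlow using 4
      constructor <;> intro <;> linarith
    · convert hhigh using 4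
      constructor <;> intro <;> linarith

end Values

theorem exists_sum_sum_sub_sq_ge {Ω : Type*} [MeasurableSpace Ω] (μ : Measure Ω)
    [IsProbabilityMeasure μ] (A : Finset (Ω → ℝ)) (hmem : ∀ f ∈ A, MemLp f 2 μ) (t : ℝ)
    (hsep : ∀ f ∈ A, ∀ g ∈ A, f ≠ g → ∫ ω, (f ω - g ω) ^ 2 ∂μ ≥ t ^ 2) :
    ∃ ω, (#A : ℝ) * (#A - 1) * t ^ 2 ≤ ∑ f ∈ A, ∑ g ∈ A, (f ω - g ω) ^ 2 := by
  classical
  have hint : ∀ f ∈ A, ∀ g ∈ A, Integrable (fun ω => (f ω - g ω) ^ 2) μ :=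
    fun f hf g hg => ((hmem f hf).sub (hmem g hg)).integrable_sq
  have hrow : ∀ f ∈ A, ((#A : ℝ) - 1) * t ^ 2 ≤ ∫ ω, ∑ g ∈ A, (f ω - g ω) ^ 2 ∂μ := by
    intro f hf
    rw [integral_finsetSum _ (hint f hf), ← add_sum_erase A _ hf]
    calc ((#A : ℝ) - 1) * t ^ 2 = ∑ g ∈ A.erase f, t ^ 2 := by
          rw [sum_const, card_erase_of_mem hf, nsmul_eq_mul, Nat.cast_pred (card_pos.2 ⟨f, hf⟩)]
      _ ≤ ∑ g ∈ A.erase f, ∫ ω, (f ω - g ω) ^ 2 ∂μ :=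
          sum_le_sum fun g hg => hsep f hf g (mem_of_mem_erase hg) (ne_of_mem_erase hg).symm
      _ = ∫ ω, (f ω - f ω) ^ 2 ∂μ + ∑ g ∈ A.erase f, ∫ ω, (f ω - g ω) ^ 2 ∂μ := by simp
  obtain ⟨ω, hω⟩ := exists_integral_le
    (integrable_finsetSum _ fun f hf => integrable_finsetSum _ (hint f hf))
  refine ⟨ω, le_trans ?_ hω⟩
  calc (#A : ℝ) * (#A - 1) * t ^ 2 = ∑ f ∈ A, ((#A : ℝ) - 1) * t ^ 2 := by
        rw [sum_const, nsmul_eq_mul, mul_assoc]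
    _ ≤ _ := sum_le_sum hrow
    _ = _ := (integral_finsetSum _ fun f hf => integrable_finsetSum _ (hint f hf)).symm

theorem stmt_5 {Ω : Type*} [MeasurableSpace Ω] (μ : Measure Ω) [IsProbabilityMeasure μ]
    (A : Finset (Ω → ℝ)) (hA : 1 < A.card)
    (hmem : ∀ f ∈ A, MemLp f 2 μ)
    (t : ℝ) (ht : 0 < t)
    (hsep : ∀ f ∈ A, ∀ g ∈ A, f ≠ g → ∫ ω, (f ω - g ω) ^ 2 ∂μ ≥ t ^ 2) :
    ∃ (i : Ω) (a β : ℝ), 0 < β ∧ β ≤ 1 / 2 ∧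
      ((({f ∈ A | f i > a + t / 12}.card : ℝ) ≥ (1 - β) * A.card ∧
        ({f ∈ A | f i < a - t / 12}.card : ℝ) ≥ (β / 2) * A.card) ∨
       (({f ∈ A | f i < a - t / 12}.card : ℝ) ≥ (1 - β) * A.card ∧
        ({f ∈ A | f i > a + t / 12}.card : ℝ) ≥ (β / 2) * A.card)) := by
  obtain ⟨ω, hω⟩ := exists_sum_sum_sub_sq_ge μ A hmem t hsep
  refine ⟨ω, exists_split A (fun f => f ω) (c := t / 12) (by positivity) hA ?_⟩
  rwa [mul_div_cancel₀ t (by norm_num : (12 : ℝ) ≠ 0)]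
end

section
/- Let Ω be a finite set of cardinality n and A a class of functions from Ω to {0, 1, ..., p}. If d is the maximal dimension of a center shattered by A, then the total number of centers shattered by A is at most Σ_{k=0}^d C(n,k) p^k. -/
/-! A shattered center `(σ, h)` has `|σ| ≤ d`, vanishes off `σ`, and on `σ` takes values strictly
between `0` and `p`: shattering with the all-`false` and all-`true` sign patterns produces
functions of `A` lying strictly below and strictly above `h` there. So the shattered centers
are among the `∑_{k ≤ d} C(n, k) (p - 1)^k` centers with these properties. -/

variable {Ω : Type*}

/-- `A` shatters the center `(σ, h)`. (For `σ = ∅` this is the trivial center,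
shattered iff `A` is nonempty.) -/
def ShattersCenter (A : Finset (Ω → ℤ)) (σ : Finset Ω) (h : Ω → ℤ) : Prop :=
  A.Nonempty ∧ ∀ θ : Ω → Bool, ∃ f ∈ A, ∀ i ∈ σ,
    (θ i = true → f i > h i) ∧ (θ i = false → f i < h i)

/-- The set of centers shattered by `A`, level functions being supported on `σ`. -/
def shatteredCenters (A : Finset (Ω → ℤ)) : Set (Finset Ω × (Ω → ℤ)) :=
  {p | (∀ i ∉ p.1, p.2 i = 0) ∧ ShattersCenter A p.1 p.2}

open Finset

theorem ShattersCenter.mem_Ioo {A : Finset (Ω → ℤ)} {σ : Finset Ω} {h : Ω → ℤ} {p : ℕ}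
    (hrange : ∀ f ∈ A, ∀ i : Ω, 0 ≤ f i ∧ f i ≤ (p : ℤ)) (hA : ShattersCenter A σ h)
    {i : Ω} (hi : i ∈ σ) : h i ∈ Ioo (0 : ℤ) p := by
  obtain ⟨f, hf, hbelow⟩ := hA.2 fun _ => false
  obtain ⟨g, hg, habove⟩ := hA.2 fun _ => true
  have := (hbelow i hi).2 rfl
  have := (habove i hi).1 rfl
  have := hrange f hf i
  have := hrange g hg i
  rw [Finset.mem_Ioo]
  omega

section Counting

variable [Fintype Ω] [DecidableEq Ω]

noncomputable def levelFunctions (p : ℕ) (σ : Finset Ω) : Finset (Ω → ℤ) :=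
  Fintype.piFinset fun i => if i ∈ σ then Ioo (0 : ℤ) p else {0}

theorem card_levelFunctions (p : ℕ) (σ : Finset Ω) :
    #(levelFunctions p σ) = (p - 1) ^ #σ := by
  have hIoo : #(Ioo (0 : ℤ) p) = p - 1 := by
    rw [Int.card_Ioo]
    omega
  rw [levelFunctions, Fintype.card_piFinset]
  simp_rw [apply_ite card, hIoo, card_singleton]
  rw [prod_ite_mem, univ_inter, prod_const]

theorem mem_levelFunctions_of_mem_shatteredCenters {A : Finset (Ω → ℤ)} {p : ℕ}
    (hrange : ∀ f ∈ A, ∀ i : Ω, 0 ≤ f i ∧ f i ≤ (p : ℤ)) {q : Finset Ω × (Ω → ℤ)}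
    (hq : q ∈ shatteredCenters A) : q.2 ∈ levelFunctions p q.1 := by
  rw [levelFunctions, Fintype.mem_piFinset]
  intro i
  by_cases hi : i ∈ q.1
  · simpa [hi] using hq.2.mem_Ioo hrange hi
  · simpa [hi] using hq.1 i hi

noncomputable def centersOfDimLE (p d : ℕ) : Finset (Finset Ω × (Ω → ℤ)) :=
  (range (d + 1)).biUnion fun k =>
    (powersetCard k univ).biUnion fun σ => {σ} ×ˢ levelFunctions p σ

theorem mem_centersOfDimLE {p d : ℕ} {q : Finset Ω × (Ω → ℤ)} (hd : #q.1 ≤ d)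
    (hq : q.2 ∈ levelFunctions p q.1) : q ∈ centersOfDimLE p d := by
  simp only [centersOfDimLE, mem_biUnion, mem_range, mem_powersetCard, mem_product,
    mem_singleton]
  exact ⟨#q.1, Nat.lt_succ_of_le hd, q.1, ⟨subset_univ _, rfl⟩, rfl, hq⟩

theorem card_centersOfDimLE_le (p d : ℕ) :
    #(centersOfDimLE (Ω := Ω) p d) ≤
      ∑ k ∈ range (d + 1), (Fintype.card Ω).choose k * (p - 1) ^ k := by
  refine card_biUnion_le.trans (sum_le_sum fun k _ => card_biUnion_le.trans_eq ?_)
  calc ∑ σ ∈ powersetCard k univ, #({σ} ×ˢ levelFunctions p σ)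
      = ∑ σ ∈ powersetCard k (univ : Finset Ω), (p - 1) ^ k :=
        sum_congr rfl fun σ hσ => by
          rw [card_product, card_singleton, one_mul, card_levelFunctions,
            (mem_powersetCard.1 hσ).2]
    _ = (Fintype.card Ω).choose k * (p - 1) ^ k := by
        rw [sum_const, card_powersetCard, card_univ, smul_eq_mul]

theorem shatteredCenters_subset_centersOfDimLE {A : Finset (Ω → ℤ)} {p d : ℕ}
    (hrange : ∀ f ∈ A, ∀ i : Ω, 0 ≤ f i ∧ f i ≤ (p : ℤ))
    (hd_max : ∀ q ∈ shatteredCenters A, q.1.card ≤ d) :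
    shatteredCenters A ⊆ ↑(centersOfDimLE (Ω := Ω) p d) := fun _ hq =>
  mem_centersOfDimLE (hd_max _ hq) (mem_levelFunctions_of_mem_shatteredCenters hrange hq)

end Counting

theorem stmt_11_general [Fintype Ω] (n : ℕ) (hn : Fintype.card Ω = n)
    (p : ℕ) (A : Finset (Ω → ℤ))
    (hrange : ∀ f ∈ A, ∀ i : Ω, 0 ≤ f i ∧ f i ≤ (p : ℤ))
    (d : ℕ)
    (hd_max : ∀ q ∈ shatteredCenters A, q.1.card ≤ d) :
    (shatteredCenters A).encard ≤ (∑ k ∈ Finset.range (d + 1), n.choose k * p ^ k : ℕ) := by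
  classical
  have hcount : #(centersOfDimLE (Ω := Ω) p d) ≤ ∑ k ∈ range (d + 1), n.choose k * p ^ k :=
    (card_centersOfDimLE_le p d).trans <| hn ▸ sum_le_sum fun k _ =>
      Nat.mul_le_mul_left _ (Nat.pow_le_pow_left (Nat.sub_le p 1) k)
  calc (shatteredCenters A).encard
      ≤ (centersOfDimLE (Ω := Ω) p d : Set _).encard :=
        Set.encard_mono (shatteredCenters_subset_centersOfDimLE hrange hd_max)
    _ = #(centersOfDimLE (Ω := Ω) p d) := Set.encard_coe_eq_coe_finsetCard _
    _ ≤ _ := by exact_mod_cast hcount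

theorem stmt_11 [Fintype Ω] (n : ℕ) (hn : Fintype.card Ω = n)
    (p : ℕ) (A : Finset (Ω → ℤ))
    (hrange : ∀ f ∈ A, ∀ i : Ω, 0 ≤ f i ∧ f i ≤ (p : ℤ))
    (d : ℕ)
    (hd_max : ∀ q ∈ shatteredCenters A, q.1.card ≤ d)
    (hd_ex : ∃ q ∈ shatteredCenters A, q.1.card = d) :
    (shatteredCenters A).encard ≤ (∑ k ∈ Finset.range (d + 1), n.choose k * p ^ k : ℕ) :=
  stmt_11_general n hn p A hrange d hd_max
end

section
/- There exists an absolute constant c > 0 such that the following holds. Let Ω be a finite set with uniform probability measure μ, and A a class of functions on Ω bounded by 1 which is t-separated in L_2(μ) for some 0 < t < 1. If |A| ≤ (1/2) exp(c t^4 k) for some k > 0, then there exists σ ⊆ Ω with |σ| ≤ k such that A is (t/2)-separated in L_2(μ_σ), where μ_σ is the uniform probability measure on σ. -/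
/-!
Keep each point of `Ω` independently with probability `p = k / (2 |Ω|)`. The sample has
expected size `k / 2`, and for distinct `f, g ∈ A` the sum `∑_{i ∈ σ} (f i - g i) ^ 2` has
expectation at least `k t² / 2`, being a sum of independent terms in `[0, 4]`.
Exponential-moment (Chernoff) bounds give `ℙ(|σ| > k) ≤ e^{-k/8}` and, for each of the fewer
than `|A|²` pairs, `ℙ(∑_{i ∈ σ} (f i - g i) ^ 2 < k t² / 4) ≤ e^{-k t² / 128}`. With
`c = 1 / 512` these probabilities add up to less than `1`, so some sample avoids all the bad
events, and `|σ| ≤ k` then turns the lower bound `k t² / 4` into `(t / 2)`-separation in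
`L₂(μ_σ)`.
-/

open Finset Real

lemma sum_union_le_of_nonneg {α : Type*} [DecidableEq α] {s t : Finset α} {f : α → ℝ}
    (hf : ∀ x, 0 ≤ f x) : ∑ x ∈ s ∪ t, f x ≤ ∑ x ∈ s, f x + ∑ x ∈ t, f x := by
  rw [← sum_union_inter]
  exact le_add_of_nonneg_right (sum_nonneg fun x _ => hf x)

lemma sum_biUnion_le_sum_sum {ι α : Type*} [DecidableEq α] (s : Finset ι) (t : ι → Finset α)
    {f : α → ℝ} (hf : ∀ x, 0 ≤ f x) :
    ∑ x ∈ s.biUnion t, f x ≤ ∑ i ∈ s, ∑ x ∈ t i, f x := by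
  classical
  induction s using Finset.induction_on with
  | empty => simp
  | insert i s hi ih =>
    rw [biUnion_insert, sum_insert hi]
    exact (sum_union_le_of_nonneg hf).trans (add_le_add le_rfl ih)

lemma le_inv_card_mul_sum {α : Type*} {σ : Finset α} {x : α → ℝ} {a k : ℝ} (ha : 0 < a)
    (hk : 0 < k) (hσ : (#σ : ℝ) ≤ k) (hx : k * a ≤ ∑ i ∈ σ, x i) :
    a ≤ (#σ : ℝ)⁻¹ * ∑ i ∈ σ, x i := by
  have hσ0 : 0 < (#σ : ℝ) := by
    rcases σ.eq_empty_or_nonempty with rfl | hne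
    · simp only [sum_empty] at hx
      nlinarith
    · exact_mod_cast hne.card_pos
  rw [le_inv_mul_iff₀ hσ0]
  exact (mul_le_mul_of_nonneg_right hσ ha.le).trans hx

lemma sq_sub_mem_Icc_of_abs_le_one {a b : ℝ} (ha : |a| ≤ 1) (hb : |b| ≤ 1) :
    (a - b) ^ 2 ∈ Set.Icc 0 4 := by
  have := abs_le.1 ha
  have := abs_le.1 hb
  exact ⟨sq_nonneg _, by nlinarith⟩

section Sampling

variable {Ω : Type*} [Fintype Ω] [DecidableEq Ω]

/-- The probability of drawing `σ` when each point of `Ω` is kept independently with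
probability `p`. -/
def sampleProb (p : ℝ) (σ : Finset Ω) : ℝ := p ^ #σ * (1 - p) ^ #σᶜ

lemma sampleProb_nonneg {p : ℝ} (hp0 : 0 ≤ p) (hp1 : p ≤ 1) (σ : Finset Ω) :
    0 ≤ sampleProb p σ := by
  have : 0 ≤ 1 - p := by linarith
  unfold sampleProb
  positivity

lemma sum_sampleProb_mul_exp (p : ℝ) (g : Ω → ℝ) :
    ∑ σ, sampleProb p σ * exp (∑ i ∈ σ, g i) = ∏ i, (p * exp (g i) + (1 - p)) := by
  rw [prod_add, powerset_univ]
  refine sum_congr rfl fun σ _ => ?_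
  rw [prod_mul_distrib, prod_const, ← exp_sum, ← compl_eq_univ_sdiff, prod_const, sampleProb]
  ring

lemma sum_sampleProb (p : ℝ) : ∑ σ : Finset Ω, sampleProb p σ = 1 := by
  simpa using sum_sampleProb_mul_exp (Ω := Ω) p 0

lemma sum_sampleProb_le_exp {p : ℝ} (hp0 : 0 ≤ p) (hp1 : p ≤ 1) (g : Ω → ℝ) {a : ℝ}
    {B : Finset (Finset Ω)} (hB : ∀ σ ∈ B, a ≤ ∑ i ∈ σ, g i) :
    ∑ σ ∈ B, sampleProb p σ ≤ exp (p * ∑ i, (exp (g i) - 1) - a) := by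
  have hW := sampleProb_nonneg (Ω := Ω) hp0 hp1
  calc ∑ σ ∈ B, sampleProb p σ
      ≤ ∑ σ ∈ B, sampleProb p σ * exp (∑ i ∈ σ, g i - a) :=
        sum_le_sum fun σ hσ =>
          le_mul_of_one_le_right (hW σ) (one_le_exp (sub_nonneg.2 (hB σ hσ)))
    _ ≤ ∑ σ, sampleProb p σ * exp (∑ i ∈ σ, g i - a) :=
        sum_le_sum_of_subset_of_nonneg (subset_univ B) fun σ _ _ =>
          mul_nonneg (hW σ) (exp_pos _).le
    _ = exp (-a) * ∏ i, (p * exp (g i) + (1 - p)) := by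
        simp_rw [exp_sub, mul_div_assoc', ← sum_div, sum_sampleProb_mul_exp, exp_neg]
        ring
    _ ≤ exp (-a) * ∏ i, exp (p * (exp (g i) - 1)) := by
        gcongr with i
        linarith [add_one_le_exp (p * (exp (g i) - 1))]
    _ = exp (p * ∑ i, (exp (g i) - 1) - a) := by
        rw [← exp_sum, ← mul_sum, ← exp_add]
        ring_nf

lemma sum_sampleProb_card_gt_le {p : ℝ} (hp0 : 0 ≤ p) (hp1 : p ≤ 1) {k : ℝ}
    (hk : p * Fintype.card Ω ≤ k / 2) :
    ∑ σ : Finset Ω with k < #σ, sampleProb p σ ≤ exp (-(k / 8)) := by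
  refine (sum_sampleProb_le_exp hp0 hp1 (fun _ => 1) (a := k) fun σ hσ => ?_).trans
    (exp_le_exp.2 ?_)
  · simpa using (mem_filter.1 hσ).2.le
  · have he := exp_one_lt_d9
    have he' : 0 ≤ exp 1 - 1 := by linarith [add_one_le_exp 1]
    have hk0 : 0 ≤ k := by linarith [mul_nonneg hp0 (Nat.cast_nonneg (Fintype.card Ω))]
    rw [sum_const, card_univ, nsmul_eq_mul]
    nlinarith [mul_le_mul_of_nonneg_right hk he']

lemma sum_sampleProb_sum_lt_le {p : ℝ} (hp0 : 0 ≤ p) (hp1 : p ≤ 1) {h : Ω → ℝ}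
    (hh : ∀ i, h i ∈ Set.Icc 0 4) {s : ℝ} (hs : s ≤ p * ∑ i, h i) :
    ∑ σ : Finset Ω with ∑ i ∈ σ, h i < s / 2, sampleProb p σ ≤ exp (-(s / 64)) := by
  refine (sum_sampleProb_le_exp hp0 hp1 (fun i => -(h i / 16)) (a := -(s / 32))
    fun σ hσ => ?_).trans (exp_le_exp.2 ?_)
  · have := (mem_filter.1 hσ).2
    rw [sum_neg_distrib, ← sum_div]
    linarith
  · have hterm : ∀ i, exp (-(h i / 16)) - 1 ≤ -(3 / 64 * h i) := fun i => by
      obtain ⟨h0, h4⟩ := hh i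
      have := abs_le.1 (abs_exp_sub_one_sub_id_le (x := -(h i / 16))
        (abs_le.2 ⟨by linarith, by linarith⟩))
      nlinarith
    have := mul_le_mul_of_nonneg_left (sum_le_sum fun i (_ : i ∈ univ) => hterm i) hp0
    rw [sum_neg_distrib, ← mul_sum] at this
    linarith

theorem exists_sample_card_le_sum_ge {ι : Type*} {p : ℝ} (hp0 : 0 ≤ p) (hp1 : p ≤ 1) {k s : ℝ}
    (hk : p * Fintype.card Ω ≤ k / 2) (P : Finset ι) (h : ι → Ω → ℝ)
    (hh : ∀ j ∈ P, ∀ i, h j i ∈ Set.Icc 0 4) (hs : ∀ j ∈ P, s ≤ p * ∑ i, h j i)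
    (hprob : exp (-(k / 8)) + #P * exp (-(s / 64)) < 1) :
    ∃ σ : Finset Ω, #σ ≤ k ∧ ∀ j ∈ P, s / 2 ≤ ∑ i ∈ σ, h j i := by
  have hW := sampleProb_nonneg (Ω := Ω) hp0 hp1
  set bad := ({σ | k < #σ} : Finset (Finset Ω)) ∪
    P.biUnion fun j => {σ | ∑ i ∈ σ, h j i < s / 2}
  have hbad : ∑ σ ∈ bad, sampleProb p σ < 1 := calc
    ∑ σ ∈ bad, sampleProb p σ
        ≤ ∑ σ with k < #σ, sampleProb p σ +
            ∑ j ∈ P, ∑ σ with ∑ i ∈ σ, h j i < s / 2, sampleProb p σ :=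
        (sum_union_le_of_nonneg hW).trans (add_le_add le_rfl (sum_biUnion_le_sum_sum _ _ hW))
    _ ≤ exp (-(k / 8)) + #P * exp (-(s / 64)) := by
        gcongr
        · exact sum_sampleProb_card_gt_le hp0 hp1 hk
        · simpa using sum_le_card_nsmul P _ _ fun j hj =>
            sum_sampleProb_sum_lt_le hp0 hp1 (hh j hj) (hs j hj)
    _ < 1 := hprob
  obtain ⟨σ, hσ⟩ : ∃ σ, σ ∉ bad := by
    by_contra! hall
    rw [eq_univ_of_forall hall, sum_sampleProb] at hbad
    exact lt_irrefl _ hbad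
  simp only [bad, mem_union, mem_filter, mem_biUnion, mem_univ, true_and, not_or,
    not_exists, not_and, not_lt] at hσ
  exact ⟨σ, hσ⟩

end Sampling

lemma exp_neg_add_mul_exp_neg_lt_one {N t k : ℝ} (hN : 2 ≤ N) (ht0 : 0 < t) (ht1 : t < 1)
    (hk : 0 < k) (hNk : N ≤ 1 / 2 * exp (1 / 512 * t ^ 4 * k)) :
    exp (-(k / 8)) + N * N * exp (-(k / 2 * t ^ 2 / 64)) < 1 := by
  set E := exp (1 / 512 * t ^ 4 * k)
  have ht4 : t ^ 4 ≤ t ^ 2 := pow_le_pow_of_le_one ht0.le ht1.le (by norm_num)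
  have ht2 : t ^ 2 ≤ 1 := pow_le_one₀ ht0.le ht1.le
  have hE : 4 ≤ E := by linarith
  have h1 : E ≤ exp (k / 8) := exp_le_exp.2 (by nlinarith)
  have h2 : E * E ≤ exp (k / 2 * t ^ 2 / 64) := by
    rw [← exp_add]
    exact exp_le_exp.2 (by nlinarith)
  have hcard : N * N * exp (-(k / 2 * t ^ 2 / 64)) ≤ 1 / 4 := by
    rw [exp_neg, ← div_eq_mul_inv, div_le_iff₀ (exp_pos _)]
    nlinarith
  have hsize : exp (-(k / 8)) ≤ 1 / 4 := by
    rw [exp_neg, inv_le_comm₀ (exp_pos _) (by norm_num)]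
    linarith
  linarith

theorem stmt_13 :
    ∃ c : ℝ, 0 < c ∧
      ∀ (Ω : Type) (_ : Fintype Ω) (_ : Nonempty Ω)
        (A : Finset (Ω → ℝ)),
        (∀ f ∈ A, ∀ i : Ω, |f i| ≤ 1) →
        ∀ t : ℝ, 0 < t → t < 1 →
        (∀ f ∈ A, ∀ g ∈ A, f ≠ g →
          (Fintype.card Ω : ℝ)⁻¹ * ∑ i : Ω, (f i - g i) ^ 2 ≥ t ^ 2) →
        ∀ k : ℝ, 0 < k → (A.card : ℝ) ≤ (1 / 2) * Real.exp (c * t ^ 4 * k) →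
        ∃ σ : Finset Ω, (σ.card : ℝ) ≤ k ∧
          ∀ f ∈ A, ∀ g ∈ A, f ≠ g →
            ((σ.card : ℝ))⁻¹ * ∑ i ∈ σ, (f i - g i) ^ 2 ≥ (t / 2) ^ 2 := by
  classical
  refine ⟨1 / 512, by norm_num, fun Ω _ _ A hA t ht0 ht1 hsep k hk hcard => ?_⟩
  set n : ℝ := (Fintype.card Ω : ℝ)
  rcases le_or_gt n k with hnk | hkn
  · refine ⟨univ, by simpa using hnk, fun f hf g hg hfg => ?_⟩
    rw [card_univ]
    exact le_trans (by nlinarith) (hsep f hf g hg hfg)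
  rcases le_or_gt #A 1 with hA1 | hA2
  · exact ⟨∅, by simpa using hk.le,
      fun f hf g hg hfg => absurd (card_le_one.1 hA1 f hf g hg) hfg⟩
  have hn : 0 < n := hk.trans hkn
  have hmean : ∀ q ∈ A.offDiag, k / 2 * t ^ 2 ≤ k / 2 * n⁻¹ * ∑ i, (q.1 i - q.2 i) ^ 2 :=
    fun q hq => by
      obtain ⟨hq1, hq2, hne⟩ := mem_offDiag.1 hq
      rw [mul_assoc]
      exact mul_le_mul_of_nonneg_left (hsep _ hq1 _ hq2 hne) (by positivity)
  have hprob : exp (-(k / 8)) + #A.offDiag * exp (-(k / 2 * t ^ 2 / 64)) < 1 := by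
    refine (exp_neg_add_mul_exp_neg_lt_one (N := #A) (by exact_mod_cast hA2) ht0 ht1 hk
      hcard).trans_le' ?_
    gcongr
    exact_mod_cast (offDiag_card A).trans_le (Nat.sub_le _ _)
  obtain ⟨σ, hσk, hσ⟩ := exists_sample_card_le_sum_ge (by positivity)
    (by rw [← div_eq_mul_inv, div_le_one hn]; linarith) (by rw [inv_mul_cancel_right₀ hn.ne'])
    A.offDiag (fun q i => (q.1 i - q.2 i) ^ 2)
    (fun q hq i => sq_sub_mem_Icc_of_abs_le_one (hA _ (mem_offDiag.1 hq).1 i)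
      (hA _ (mem_offDiag.1 hq).2.1 i)) hmean hprob
  refine ⟨σ, hσk, fun f hf g hg hfg => le_inv_card_mul_sum (by positivity) hk hσk ?_⟩
  linarith [hσ (f, g) (mem_offDiag.2 ⟨hf, hg, hfg⟩)]
end

section
/- Let B ⊆ ℝ^n be convex and symmetric (B = -B), viewed as a class of functions on {1,...,n}. If a set σ ⊆ {1,...,n} is t-shattered by B with some level function h, then P_σ(B) ⊇ [-t/2, t/2]^σ, where P_σ is the coordinate projection onto ℝ^σ. -/
/-!
Symmetrizing the witnesses, `(f_{σ'} - f_{σ \ σ'}) / 2`, shows that `B` also `t`-shatters `σ` at the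
constant level `-t/2`. A convex set that `t`-shatters `σ` at a level `h` projects onto the box
`∏ i ∈ σ, [h i, h i + t]`: to prescribe the value at a new coordinate `j`, take the witnesses for
the patterns `σ'` and `insert j σ'`. They agree in sign on the remaining coordinates and straddle
`[h j, h j + t]` at `j`, so a point of the segment between them takes the prescribed value at `j`.
Induction on `σ`, applied to the convex slices `{f ∈ C | f j = z j}`, then gives the theorem.
-/

variable {ι : Type*}

def ShattersAtLevel (B : Set (ι → ℝ)) (t : ℝ) (h : ι → ℝ) (σ : Finset ι) : Prop :=
  ∀ σ' ⊆ σ, ∃ f ∈ B, (∀ i ∈ σ', h i + t ≤ f i) ∧ ∀ i ∈ σ, i ∉ σ' → f i ≤ h i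

theorem convex_setOf_shatterPattern (t : ℝ) (h : ι → ℝ) (σ σ' : Finset ι) :
    Convex ℝ {f : ι → ℝ | (∀ i ∈ σ', h i + t ≤ f i) ∧ ∀ i ∈ σ, i ∉ σ' → f i ≤ h i} := by
  intro f ⟨hf₁, hf₂⟩ g ⟨hg₁, hg₂⟩ a b ha hb hab
  refine ⟨fun i hi => ?_, fun i hi hi' => ?_⟩ <;>
    simp only [Pi.add_apply, Pi.smul_apply, smul_eq_mul]
  · have : a * (h i + t) + b * (h i + t) = h i + t := by rw [← add_mul, hab, one_mul]
    linarith [mul_le_mul_of_nonneg_left (hf₁ i hi) ha, mul_le_mul_of_nonneg_left (hg₁ i hi) hb]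
  · have : a * h i + b * h i = h i := by rw [← add_mul, hab, one_mul]
    linarith [mul_le_mul_of_nonneg_left (hf₂ i hi hi') ha,
      mul_le_mul_of_nonneg_left (hg₂ i hi hi') hb]

theorem exists_mem_segment_apply_eq {f g : ι → ℝ} (j : ι) {c : ℝ} (hg : g j ≤ c) (hf : c ≤ f j) :
    ∃ x ∈ segment ℝ f g, x j = c := by
  have : c ∈ segment ℝ (f j) (g j) := by
    rw [segment_symm, segment_eq_Icc (hg.trans hf)]
    exact ⟨hg, hf⟩
  rwa [← LinearMap.proj_apply (R := ℝ) (φ := fun _ : ι => ℝ) j f,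
    ← LinearMap.proj_apply (R := ℝ) j g, ← LinearMap.coe_toAffineMap, ← image_segment] at this

theorem ShattersAtLevel.exists_apply_eq {C : Set (ι → ℝ)} {t : ℝ} {h : ι → ℝ}
    {σ : Finset ι} (hC : Convex ℝ C) (hshat : ShattersAtLevel C t h σ) {z : ι → ℝ}
    (hz : ∀ i ∈ σ, h i ≤ z i ∧ z i ≤ h i + t) :
    ∃ f ∈ C, ∀ i ∈ σ, f i = z i := by
  classical
  induction σ using Finset.induction_on generalizing C with
  | empty => simpa using (hshat ∅ subset_rfl).imp fun _ hf => hf.1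
  | @insert j σ hj ih =>
    set C' := C ∩ {f | f j = z j}
    have hC' : Convex ℝ C' :=
      hC.inter <| (convex_singleton (z j)).linear_preimage <|
        LinearMap.proj (R := ℝ) (φ := fun _ : ι => ℝ) j
    have hshat' : ShattersAtLevel C' t h σ := by
      intro σ' hσ'
      have hjσ' : j ∉ σ' := fun hj' => hj (hσ' hj')
      obtain ⟨f, hfC, hf₁, hf₂⟩ := hshat (insert j σ') (Finset.insert_subset_insert j hσ')
      obtain ⟨g, hgC, hg₁, hg₂⟩ := hshat σ' (hσ'.trans (Finset.subset_insert j σ))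
      obtain ⟨x, hx, hxj⟩ := exists_mem_segment_apply_eq j
        ((hg₂ j (Finset.mem_insert_self j σ) hjσ').trans (hz j (Finset.mem_insert_self j σ)).1)
        ((hz j (Finset.mem_insert_self j σ)).2.trans (hf₁ j (Finset.mem_insert_self j σ')))
      have hpattern := ((convex_setOf_shatterPattern t h σ σ').inter hC).segment_subset
        (x := f) (y := g)
        ⟨⟨fun i hi => hf₁ i (Finset.mem_insert_of_mem hi), fun i hi hi' =>
          hf₂ i (Finset.mem_insert_of_mem hi) (by simp [hi', ne_of_mem_of_not_mem hi hj])⟩, hfC⟩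
        ⟨⟨hg₁, fun i hi hi' => hg₂ i (Finset.mem_insert_of_mem hi) hi'⟩, hgC⟩ hx
      exact ⟨x, ⟨hpattern.2, hxj⟩, hpattern.1⟩
    obtain ⟨f, ⟨hfC, hfj⟩, hf⟩ :=
      ih hC' hshat' (fun i hi => hz i (Finset.mem_insert_of_mem hi))
    exact ⟨f, hfC, (Finset.forall_mem_insert j σ _).mpr ⟨hfj, hf⟩⟩

theorem ShattersAtLevel.symmetrize {B : Set (ι → ℝ)} {t : ℝ} {h : ι → ℝ} {σ : Finset ι}
    (hconv : Convex ℝ B) (hsymm : ∀ f ∈ B, -f ∈ B) (hshat : ShattersAtLevel B t h σ) :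
    ShattersAtLevel B t (fun _ => -(t / 2)) σ := by
  classical
  intro σ' hσ'
  obtain ⟨f, hfB, hf₁, hf₂⟩ := hshat σ' hσ'
  obtain ⟨g, hgB, hg₁, hg₂⟩ := hshat (σ \ σ') Finset.sdiff_subset
  refine ⟨(1 / 2 : ℝ) • f + (1 / 2 : ℝ) • -g,
    hconv hfB (hsymm g hgB) (by norm_num) (by norm_num) (by norm_num), fun i hi => ?_,
    fun i hi hi' => ?_⟩ <;> simp only [Pi.add_apply, Pi.smul_apply, Pi.neg_apply, smul_eq_mul]
  · linarith [hf₁ i hi, hg₂ i (hσ' hi) (fun hmem => (Finset.mem_sdiff.mp hmem).2 hi)]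
  · linarith [hf₂ i hi hi', hg₁ i (Finset.mem_sdiff.mpr ⟨hi, hi'⟩)]

theorem stmt_17_general (n : ℕ) (B : Set (Fin n → ℝ))
    (hconv : Convex ℝ B) (hsymm : ∀ f ∈ B, -f ∈ B)
    (t : ℝ)
    (σ : Finset (Fin n)) (h : Fin n → ℝ)
    (hshat : ∀ σ' ⊆ σ, ∃ f ∈ B,
      (∀ i ∈ σ', f i ≥ h i + t) ∧ ∀ i ∈ σ, i ∉ σ' → f i ≤ h i) :
    ∀ z : Fin n → ℝ, (∀ i ∈ σ, |z i| ≤ t / 2) →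
      ∃ f ∈ B, ∀ i ∈ σ, f i = z i := by
  intro z hz
  have hshat₀ : ShattersAtLevel B t (fun _ => -(t / 2)) σ :=
    ShattersAtLevel.symmetrize hconv hsymm hshat
  refine hshat₀.exists_apply_eq hconv fun i hi => ?_
  have := abs_le.mp (hz i hi)
  constructor <;> linarith

theorem stmt_17 (n : ℕ) (B : Set (Fin n → ℝ))
    (hconv : Convex ℝ B) (hsymm : ∀ f ∈ B, -f ∈ B)
    (t : ℝ) (ht : 0 < t)
    (σ : Finset (Fin n)) (h : Fin n → ℝ)
    (hshat : ∀ σ' ⊆ σ, ∃ f ∈ B,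
      (∀ i ∈ σ', f i ≥ h i + t) ∧ ∀ i ∈ σ, i ∉ σ' → f i ≤ h i) :
    ∀ z : Fin n → ℝ, (∀ i ∈ σ, |z i| ≤ t / 2) →
      ∃ f ∈ B, ∀ i ∈ σ, f i = z i :=
  stmt_17_general n B hconv hsymm t σ h hshat
end
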